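/- For any convex domain G ⊊ ℝⁿ, the function w_G is a quasi-metric with constant at most √2: w_G(x,y) ≤ √2·(w_G(x,z) + w_G(z,y)) for all x, y, z ∈ G. -/

import Mathlib

open Metric Set

variable {E : Type*} [NormedAddCommGroup E] [NormedSpace ℝ E]

/-- Distance to the boundary of `G`. -/
noncomputable def dG (G : Set E) (x : E) : ℝ := Metric.infDist x (frontier G)

/-- The point pair function `p_G`. -/
noncomputable def pG (G : Set E) (x y : E) : ℝ :=
  dist x y / Real.sqrt (dist x y ^ 2 + 4 * dG G x * dG G y)

/-- The triangular ratio metric `s_G`. -/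
noncomputable def sG (G : Set E) (x y : E) : ℝ :=
  dist x y / ⨅ z : frontier G, (dist x (z : E) + dist (z : E) y)

/-- The `j*_G` metric. -/
noncomputable def jG (G : Set E) (x y : E) : ℝ :=
  dist x y / (dist x y + 2 * min (dG G x) (dG G y))

/-- The set `X̃` of points `x̃` with `|x−x̃| = 2 d_G(x)` whose midpoint with `x` lies on `∂G`. -/
def Xt (G : Set E) (x : E) : Set E :=
  {x' | dist x x' = 2 * dG G x ∧ (2⁻¹ : ℝ) • (x + x') ∈ frontier G}

/-- The quasi-metric `w_G` defined for convex domains. -/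
noncomputable def wG (G : Set E) (x y : E) : ℝ :=
  dist x y / min (Metric.infDist x (Xt G y)) (Metric.infDist y (Xt G x))

/-!
For convex `G`, `w_G` is squeezed between the metric `j*_G` and the point pair function `p_G`:
`j*_G ≤ w_G ≤ p_G ≤ √2 j*_G`. The upper bound `w_G ≤ p_G` is the geometric step: if `x̃ ∈ X̃`
then `m = (x + x̃)/2` is a nearest boundary point of `x`, the hyperplane through `m` orthogonal
to `m - x` supports `G`, and the distance of `y` to that hyperplane bounds `d_G(y)`, which gives
`|y - x̃|² ≥ |x - y|² + 4 d_G(x) d_G(y)`. The triangle inequality for `j*_G` then transfers to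
`w_G` at the cost of the factor `√2`.
-/

lemma div_add_le_div_add_of_le {a b c : ℝ} (ha : 0 ≤ a) (hab : a ≤ b) (hc : 0 ≤ c) :
    a / (a + c) ≤ b / (b + c) := by
  rcases ha.eq_or_lt with rfl | ha
  · simp only [zero_div, zero_add]; positivity
  rw [div_le_div_iff₀ (by positivity) (by linarith)]
  nlinarith

lemma div_add_le_div_add_of_le_right {a b c : ℝ} (ha : 0 ≤ a) (hc : 0 ≤ c) (hcb : c ≤ b) :
    a / (a + b) ≤ a / (a + c) := by
  rcases ha.eq_or_lt with rfl | ha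
  · simp
  exact div_le_div_of_nonneg_left ha.le (by positivity) (by linarith)

lemma add_div_add_le {v w p : ℝ} (hv : 0 ≤ v) (hw : 0 ≤ w) (hp : 0 ≤ p) :
    (v + w) / (v + w + p) ≤ v / (v + p) + w / (w + (p + 2 * v)) := by
  rcases (add_nonneg hv hp).eq_or_lt with hvp | hvp
  · obtain ⟨rfl, rfl⟩ : v = 0 ∧ p = 0 := ⟨by linarith, by linarith⟩
    simp
  rcases hw.eq_or_lt with rfl | hw
  · simp
  rw [div_add_div _ _ hvp.ne' (by positivity), div_le_div_iff₀ (by positivity) (by positivity)]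
  nlinarith [mul_nonneg (mul_nonneg hv hw.le) hv, mul_nonneg (mul_nonneg hw.le hw.le) hv]

lemma div_add_two_mul_le_add {u v w p q r : ℝ} (hu : 0 ≤ u) (hv : 0 ≤ v) (hw : 0 ≤ w)
    (huvw : u ≤ v + w) (hq : 0 ≤ q) (hr : 0 ≤ r) (hqp : q ≤ p) (hrp : r ≤ p + v) :
    u / (u + 2 * p) ≤ v / (v + 2 * q) + w / (w + 2 * r) := by
  have hp : 0 ≤ p := hq.trans hqp
  calc u / (u + 2 * p) ≤ (v + w) / (v + w + 2 * p) :=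
        div_add_le_div_add_of_le hu huvw (by positivity)
    _ ≤ v / (v + 2 * p) + w / (w + (2 * p + 2 * v)) := add_div_add_le hv hw (by positivity)
    _ ≤ v / (v + 2 * q) + w / (w + 2 * r) :=
        add_le_add (div_add_le_div_add_of_le_right hv (by positivity) (by linarith))
          (div_add_le_div_add_of_le_right hw (by positivity) (by linarith))

section

variable {V : Type*} [NormedAddCommGroup V]

lemma dG_nonneg (G : Set V) (x : V) : 0 ≤ dG G x := infDist_nonneg

lemma dG_le_dG_add_dist (G : Set V) (x y : V) : dG G x ≤ dG G y + dist x y :=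
  infDist_le_infDist_add_dist

lemma jG_comm (G : Set V) (x y : V) : jG G x y = jG G y x := by
  rw [jG, jG, dist_comm, min_comm]

lemma jG_triangle (G : Set V) (x y z : V) : jG G x y ≤ jG G x z + jG G z y := by
  wlog hxy : dG G x ≤ dG G y generalizing x y
  · rw [jG_comm, add_comm, jG_comm G x, jG_comm G z]
    exact this y x (le_of_not_ge hxy)
  have hzx := dG_le_dG_add_dist G z x
  rw [dist_comm] at hzx
  unfold jG
  rw [min_eq_left hxy]
  rcases le_total (dG G z) (dG G x) with hz | hx
  · rw [min_eq_right hz, min_eq_left (hz.trans hxy)]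
    exact div_add_two_mul_le_add dist_nonneg dist_nonneg dist_nonneg (dist_triangle x z y)
      (dG_nonneg G z) (dG_nonneg G z) hz hzx
  · rw [min_eq_left hx]
    exact div_add_two_mul_le_add dist_nonneg dist_nonneg dist_nonneg (dist_triangle x z y)
      (dG_nonneg G x) (le_min (dG_nonneg G z) (dG_nonneg G y)) le_rfl
      ((min_le_left _ _).trans hzx)

lemma pG_le_sqrt_two_mul_jG (G : Set V) (x y : V) : pG G x y ≤ √2 * jG G x y := by
  unfold pG jG
  rcases (dist_nonneg : 0 ≤ dist x y).eq_or_lt with hd | hd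
  · simp [← hd]
  have hA := dG_nonneg G x
  have hB := dG_nonneg G y
  have hm : 0 ≤ min (dG G x) (dG G y) := le_min hA hB
  have hmm : min (dG G x) (dG G y) ^ 2 ≤ dG G x * dG G y := by
    rw [sq]; exact mul_le_mul (min_le_left _ _) (min_le_right _ _) hm hA
  have hsqrt : dist x y + 2 * min (dG G x) (dG G y) ≤
      √2 * √(dist x y ^ 2 + 4 * dG G x * dG G y) := by
    rw [← Real.sqrt_mul zero_le_two, Real.le_sqrt (by positivity) (by positivity)]
    nlinarith [sq_nonneg (dist x y - 2 * min (dG G x) (dG G y))]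
  rw [mul_div_assoc', div_le_div_iff₀ (Real.sqrt_pos.2 (by positivity)) (by positivity)]
  nlinarith

end

section

open scoped RealInnerProductSpace

variable {F : Type*} [NormedAddCommGroup F] [InnerProductSpace ℝ F] [CompleteSpace F]
  {G : Set F}

lemma inner_sub_lt_zero_of_ball_subset (hGopen : IsOpen G) (hGconv : Convex ℝ G) {x m g : F}
    (hx : x ∈ G) (hball : ball x ‖m - x‖ ⊆ G) (hm : m ∉ G) (hg : g ∈ G) :
    ⟪m - x, g - m⟫ < 0 := by
  obtain ⟨f, hf⟩ := geometric_hahn_banach_open_point hGconv hGopen hm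
  set v := (InnerProductSpace.toDual ℝ F).symm f
  have hfv : ∀ a, f a = ⟪v, a⟫ := fun _ => InnerProductSpace.toDual_symm_apply.symm
  have hvx : 0 < ⟪v, m - x⟫ := by
    rw [inner_sub_right, ← hfv, ← hfv]; linarith [hf x hx]
  have hv : 0 < ‖v‖ := norm_pos_iff.2 (by rintro hv; simp [hv] at hvx)
  have hmx : 0 < ‖m - x‖ := norm_pos_iff.2 (sub_ne_zero.2 (by rintro rfl; exact hm hx))
  -- otherwise the ball would reach beyond the hyperplane `f = f m` separating `m` from `G`
  have hnorm : ‖v‖ * ‖m - x‖ ≤ ⟪v, m - x⟫ := by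
    by_contra! hlt
    have hmem : x + (⟪v, m - x⟫ / ‖v‖ ^ 2) • v ∈ G := by
      refine hball ?_
      rw [mem_ball, dist_eq_norm, add_sub_cancel_left, norm_smul,
        Real.norm_of_nonneg (by positivity), sq, ← div_div, div_mul_cancel₀ _ hv.ne',
        div_lt_iff₀' hv]
      exact hlt
    have := hf _ hmem
    rw [hfv, hfv, inner_add_right, real_inner_smul_right, real_inner_self_eq_norm_sq,
      div_mul_cancel₀ _ (by positivity), inner_sub_right] at this
    linarith
  have hvdir : ‖m - x‖ • v = ‖v‖ • (m - x) :=
    inner_eq_norm_mul_iff_real.1 (le_antisymm (real_inner_le_norm _ _) hnorm)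
  have hvg : ⟪v, g - m⟫ < 0 := by
    rw [inner_sub_right, ← hfv, ← hfv]; linarith [hf g hg]
  have hscale : ‖v‖ * ⟪m - x, g - m⟫ = ‖m - x‖ * ⟪v, g - m⟫ := by
    rw [← real_inner_smul_left, ← hvdir, real_inner_smul_left]
  exact neg_of_mul_neg_right (hscale ▸ mul_neg_of_pos_of_neg hmx hvg) hv.le

lemma infDist_compl_mul_norm_le_inner (hGopen : IsOpen G) (hGconv : Convex ℝ G) {x m y : F}
    (hx : x ∈ G) (hball : ball x ‖m - x‖ ⊆ G) (hm : m ∉ G) (hy : y ∈ G) :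
    infDist y Gᶜ * ‖m - x‖ ≤ ⟪m - x, m - y⟫ := by
  have hlt := inner_sub_lt_zero_of_ball_subset hGopen hGconv hx hball hm hy
  have hmx : 0 < ‖m - x‖ := norm_pos_iff.2 (sub_ne_zero.2 (by rintro rfl; exact hm hx))
  set s := ⟪m - x, m - y⟫
  have hs : 0 < s := by
    rw [← neg_sub m y, inner_neg_right] at hlt; linarith
  -- the foot of the perpendicular from `y` to the supporting hyperplane at `m` lies outside `G`
  set h := y + (s / ‖m - x‖ ^ 2) • (m - x)
  have hh : h ∉ G := fun hh => by
    have := inner_sub_lt_zero_of_ball_subset hGopen hGconv hx hball hm hh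
    rw [show h - m = (s / ‖m - x‖ ^ 2) • (m - x) - (m - y) by simp only [h]; abel,
      inner_sub_right, real_inner_smul_right, real_inner_self_eq_norm_sq,
      div_mul_cancel₀ _ (by positivity)] at this
    exact lt_irrefl _ (sub_self s ▸ this)
  calc infDist y Gᶜ * ‖m - x‖ ≤ dist y h * ‖m - x‖ := by
        gcongr; exact infDist_le_dist_of_mem hh
    _ = s := by
        rw [dist_eq_norm, show y - h = -((s / ‖m - x‖ ^ 2) • (m - x)) by simp only [h]; abel,
          norm_neg, norm_smul, Real.norm_of_nonneg (by positivity)]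
        field_simp

end

section

open scoped RealInnerProductSpace

variable {F : Type*} [NormedAddCommGroup F] [InnerProductSpace ℝ F] [FiniteDimensional ℝ F]
  {G : Set F}

lemma dG_eq_infDist_compl (hGopen : IsOpen G) (hGne : G ≠ univ) {x : F} (hx : x ∈ G) :
    dG G x = infDist x Gᶜ := by
  obtain ⟨m, hm, hxm⟩ := exists_mem_frontier_infDist_compl_eq_dist hx hGne
  refine le_antisymm (hxm ▸ infDist_le_dist_of_mem hm) (infDist_le_infDist_of_subset ?_ ⟨m, hm⟩)
  rw [hGopen.frontier_eq]
  exact sdiff_subset_compl _ _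

lemma dG_pos (hGopen : IsOpen G) (hGne : G ≠ univ) {x : F} (hx : x ∈ G) : 0 < dG G x := by
  rw [dG_eq_infDist_compl hGopen hGne hx]
  exact (hGopen.isClosed_compl.notMem_iff_infDist_pos (nonempty_compl.2 hGne)).1
    (not_not_intro hx)

lemma Xt_nonempty (hGopen : IsOpen G) (hGne : G ≠ univ) {x : F} (hx : x ∈ G) :
    (Xt G x).Nonempty := by
  obtain ⟨m, hm, hxm⟩ := exists_mem_frontier_infDist_compl_eq_dist hx hGne
  refine ⟨(2 : ℝ) • m - x, ?_, ?_⟩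
  · rw [dist_eq_norm, show x - ((2 : ℝ) • m - x) = (2 : ℝ) • (x - m) by module, norm_smul,
      ← dist_eq_norm, ← hxm, dG_eq_infDist_compl hGopen hGne hx, Real.norm_two]
  · rwa [show (2⁻¹ : ℝ) • (x + ((2 : ℝ) • m - x)) = m by module]

lemma infDist_Xt_le (hGopen : IsOpen G) (hGne : G ≠ univ) {x : F} (hx : x ∈ G) (y : F) :
    infDist y (Xt G x) ≤ dist x y + 2 * dG G x := by
  obtain ⟨x', hx'⟩ := Xt_nonempty hGopen hGne hx
  calc infDist y (Xt G x) ≤ dist y x' := infDist_le_dist_of_mem hx'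
    _ ≤ dist x y + dist x x' := by rw [dist_comm x y]; exact dist_triangle _ _ _
    _ = dist x y + 2 * dG G x := by rw [hx'.1]

lemma sq_dist_add_le_sq_dist_of_mem_Xt (hGopen : IsOpen G) (hGconv : Convex ℝ G)
    (hGne : G ≠ univ) {x y x' : F} (hx : x ∈ G) (hy : y ∈ G) (hx' : x' ∈ Xt G x) :
    dist x y ^ 2 + 4 * dG G x * dG G y ≤ dist y x' ^ 2 := by
  obtain ⟨hxx', hm⟩ := hx'
  set m := (2⁻¹ : ℝ) • (x + x')
  have hmx : ‖m - x‖ = dG G x := by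
    rw [show m - x = (2⁻¹ : ℝ) • (x' - x) by module, norm_smul, ← dist_eq_norm, dist_comm, hxx',
      Real.norm_of_nonneg (by norm_num)]
    ring
  have hball : ball x ‖m - x‖ ⊆ G := by
    rw [hmx, dG_eq_infDist_compl hGopen hGne hx]; exact ball_infDist_compl_subset
  have hmG : m ∉ G := by rw [hGopen.frontier_eq] at hm; exact hm.2
  have hsupp := infDist_compl_mul_norm_le_inner hGopen hGconv hx hball hmG hy
  rw [← dG_eq_infDist_compl hGopen hGne hy, hmx] at hsupp
  have hexpand : dist y x' ^ 2 = dist x y ^ 2 + 4 * ⟪m - x, m - y⟫ := by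
    rw [dist_eq_norm, dist_eq_norm, show y - x' = (y - x) - (2 : ℝ) • (m - x) by module,
      show m - y = (m - x) - (y - x) by abel, norm_sub_sq_real, inner_sub_right, norm_smul,
      real_inner_smul_right, real_inner_self_eq_norm_sq, real_inner_comm, ← norm_neg (x - y),
      neg_sub]
    norm_num
    ring
  nlinarith

lemma sqrt_le_infDist_Xt (hGopen : IsOpen G) (hGconv : Convex ℝ G) (hGne : G ≠ univ)
    {x y : F} (hx : x ∈ G) (hy : y ∈ G) :
    √(dist x y ^ 2 + 4 * dG G x * dG G y) ≤ infDist y (Xt G x) :=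
  (le_infDist (Xt_nonempty hGopen hGne hx)).2 fun _ hx' => Real.sqrt_le_left dist_nonneg |>.2
    (sq_dist_add_le_sq_dist_of_mem_Xt hGopen hGconv hGne hx hy hx')

lemma sqrt_le_min_infDist_Xt (hGopen : IsOpen G) (hGconv : Convex ℝ G) (hGne : G ≠ univ)
    {x y : F} (hx : x ∈ G) (hy : y ∈ G) :
    √(dist x y ^ 2 + 4 * dG G x * dG G y) ≤ min (infDist x (Xt G y)) (infDist y (Xt G x)) := by
  refine le_min ?_ (sqrt_le_infDist_Xt hGopen hGconv hGne hx hy)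
  rw [dist_comm, mul_right_comm]
  exact sqrt_le_infDist_Xt hGopen hGconv hGne hy hx

lemma wG_le_pG (hGopen : IsOpen G) (hGconv : Convex ℝ G) (hGne : G ≠ univ)
    {x y : F} (hx : x ∈ G) (hy : y ∈ G) : wG G x y ≤ pG G x y := by
  have hpos : 0 < √(dist x y ^ 2 + 4 * dG G x * dG G y) :=
    Real.sqrt_pos.2 (by nlinarith [dG_pos hGopen hGne hx, dG_pos hGopen hGne hy])
  exact div_le_div_of_nonneg_left dist_nonneg hpos
    (sqrt_le_min_infDist_Xt hGopen hGconv hGne hx hy)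

lemma jG_le_wG (hGopen : IsOpen G) (hGconv : Convex ℝ G) (hGne : G ≠ univ)
    {x y : F} (hx : x ∈ G) (hy : y ∈ G) : jG G x y ≤ wG G x y := by
  have hpos : 0 < min (infDist x (Xt G y)) (infDist y (Xt G x)) :=
    lt_of_lt_of_le (Real.sqrt_pos.2 (by nlinarith [dG_pos hGopen hGne hx, dG_pos hGopen hGne hy]))
      (sqrt_le_min_infDist_Xt hGopen hGconv hGne hx hy)
  refine div_le_div_of_nonneg_left dist_nonneg hpos ?_
  rcases le_total (dG G x) (dG G y) with h | h
  · rw [min_eq_left h]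
    exact (min_le_right _ _).trans (infDist_Xt_le hGopen hGne hx y)
  · rw [min_eq_right h, dist_comm]
    exact (min_le_left _ _).trans (infDist_Xt_le hGopen hGne hy x)

end

theorem w_quasi_metric_convex_general (n : ℕ) (G : Set (EuclideanSpace ℝ (Fin n)))
    (hGopen : IsOpen G) (hGconv : Convex ℝ G)
    (hGne : G ≠ Set.univ)
    (x y z : EuclideanSpace ℝ (Fin n)) (hx : x ∈ G) (hy : y ∈ G) (hz : z ∈ G) :
    wG G x y ≤ Real.sqrt 2 * (wG G x z + wG G z y) :=
  calc wG G x y ≤ pG G x y := wG_le_pG hGopen hGconv hGne hx hy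
    _ ≤ √2 * jG G x y := pG_le_sqrt_two_mul_jG G x y
    _ ≤ √2 * (jG G x z + jG G z y) := by gcongr; exact jG_triangle G x y z
    _ ≤ √2 * (wG G x z + wG G z y) := by
        gcongr
        · exact jG_le_wG hGopen hGconv hGne hx hz
        · exact jG_le_wG hGopen hGconv hGne hz hy

/-- For any convex domain `G ⊊ ℝⁿ`, `w_G` is a quasi-metric with constant at most `√2`. -/
theorem w_quasi_metric_convex (n : ℕ) (G : Set (EuclideanSpace ℝ (Fin n)))
    (hGopen : IsOpen G) (hGconv : Convex ℝ G) (hGnonempty : G.Nonempty)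
    (hGne : G ≠ Set.univ)
    (x y z : EuclideanSpace ℝ (Fin n)) (hx : x ∈ G) (hy : y ∈ G) (hz : z ∈ G) :
    wG G x y ≤ Real.sqrt 2 * (wG G x z + wG G z y) :=
  w_quasi_metric_convex_general n G hGopen hGconv hGne x y z hx hy hz
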